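/- arXiv:1711.09970 — 2 statements merged into one kernel-verified Lean document; each statement's English description precedes it below -/
import Mathlib

section
/- Let u, v be C² functions on an open set of ℝ² and x₀ ∈ ℝ². Then Δu (∇v · (x − x₀)) + Δv (∇u · (x − x₀)) = div(∇u (∇v · (x − x₀)) + ∇v (∇u · (x − x₀)) − (∇u · ∇v)(x − x₀)). -/
/-- First partial derivative of `f : ℝ² → ℝ`. -/
noncomputable def pd1 (f : ℝ × ℝ → ℝ) (x : ℝ × ℝ) : ℝ := fderiv ℝ f x (1, 0)

/-- Second partial derivative of `f : ℝ² → ℝ`. -/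
noncomputable def pd2 (f : ℝ × ℝ → ℝ) (x : ℝ × ℝ) : ℝ := fderiv ℝ f x (0, 1)

/-- Gradient of `f : ℝ² → ℝ`. -/
noncomputable def grad (f : ℝ × ℝ → ℝ) (x : ℝ × ℝ) : ℝ × ℝ := (pd1 f x, pd2 f x)

/-- Divergence of a vector field on `ℝ²`. -/
noncomputable def divg (F : ℝ × ℝ → ℝ × ℝ) (x : ℝ × ℝ) : ℝ :=
  pd1 (fun y => (F y).1) x + pd2 (fun y => (F y).2) x

/-- Laplacian of `f : ℝ² → ℝ`. -/
noncomputable def lap (f : ℝ × ℝ → ℝ) (x : ℝ × ℝ) : ℝ := divg (grad f) x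

/-- Euclidean dot product on `ℝ²`. -/
def dot (a b : ℝ × ℝ) : ℝ := a.1 * b.1 + a.2 * b.2

/-! Expanding with `div (φ F) = ∇φ · F + φ div F` and `div (x - x₀) = 2`, the right-hand side is the
left-hand side plus `D²v(∇u, w) + D²u(∇v, w) - D²u(w, ∇v) - D²v(w, ∇u)` with `w = x - x₀`
(the terms `∇u · ∇v` cancel); this vanishes by the symmetry of second derivatives. -/

open ContinuousLinearMap

section Calculus

variable {x : ℝ × ℝ}

/-- The gradient of a linear form on `ℝ²`; `grad f y` is `gradCLM (fderiv ℝ f y)` by definition. -/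
noncomputable def gradCLM : (ℝ × ℝ →L[ℝ] ℝ) →L[ℝ] ℝ × ℝ :=
  (apply ℝ ℝ ((1 : ℝ), (0 : ℝ))).prod (apply ℝ ℝ ((0 : ℝ), (1 : ℝ)))

lemma dot_gradCLM (φ : ℝ × ℝ →L[ℝ] ℝ) (w : ℝ × ℝ) : dot (gradCLM φ) w = φ w := by
  have hw : w = w.1 • ((1 : ℝ), (0 : ℝ)) + w.2 • ((0 : ℝ), (1 : ℝ)) := by ext <;> simp
  conv_rhs => rw [hw]
  simp only [gradCLM, dot, map_add, map_smul, smul_eq_mul, prod_apply, apply_apply]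
  ring

lemma dot_comm (a b : ℝ × ℝ) : dot a b = dot b a := by
  simp only [dot]; ring

lemma dot_grad (f : ℝ × ℝ → ℝ) (w : ℝ × ℝ) : dot (grad f x) w = fderiv ℝ f x w :=
  dot_gradCLM _ w

lemma hasFDerivAt_grad {f : ℝ × ℝ → ℝ} (hf : DifferentiableAt ℝ (fderiv ℝ f) x) :
    HasFDerivAt (grad f) (gradCLM.comp (fderiv ℝ (fderiv ℝ f) x)) x :=
  gradCLM.hasFDerivAt.comp x hf.hasFDerivAt

lemma ContDiffAt.differentiableAt_fderiv {f : ℝ × ℝ → ℝ} (hf : ContDiffAt ℝ 2 f x) :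
    DifferentiableAt ℝ (fderiv ℝ f) x :=
  (hf.fderiv_right (m := 1) (by norm_num)).differentiableAt one_ne_zero

lemma ContDiffAt.dot_fderiv_grad_comm {f : ℝ × ℝ → ℝ} (hf : ContDiffAt ℝ 2 f x) (p q : ℝ × ℝ) :
    dot (fderiv ℝ (grad f) x p) q = dot (fderiv ℝ (grad f) x q) p := by
  rw [(hasFDerivAt_grad hf.differentiableAt_fderiv).fderiv]
  simp only [comp_apply, dot_gradCLM]
  exact hf.isSymmSndFDerivAt (by norm_num) p q

lemma DifferentiableAt.dot {F G : ℝ × ℝ → ℝ × ℝ} (hF : DifferentiableAt ℝ F x)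
    (hG : DifferentiableAt ℝ G x) : DifferentiableAt ℝ (fun y => dot (F y) (G y)) x := by
  unfold _root_.dot; fun_prop

lemma fderiv_dot_apply {F G : ℝ × ℝ → ℝ × ℝ} (hF : DifferentiableAt ℝ F x)
    (hG : DifferentiableAt ℝ G x) (e : ℝ × ℝ) :
    fderiv ℝ (fun y => dot (F y) (G y)) x e
      = dot (fderiv ℝ F x e) (G x) + dot (F x) (fderiv ℝ G x e) := by
  have hF' := hF.hasFDerivAt
  have hG' := hG.hasFDerivAt
  unfold _root_.dot
  rw [((hF'.fst.fun_mul hG'.fst).fun_add (hF'.snd.fun_mul hG'.snd)).fderiv]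
  simp only [add_apply, smul_apply, comp_apply, coe_fst', coe_snd', smul_eq_mul]
  ring

lemma divg_eq_fderiv {F : ℝ × ℝ → ℝ × ℝ} (hF : DifferentiableAt ℝ F x) :
    divg F x = (fderiv ℝ F x ((1 : ℝ), (0 : ℝ))).1 + (fderiv ℝ F x ((0 : ℝ), (1 : ℝ))).2 := by
  simp only [divg, pd1, pd2, hF.hasFDerivAt.fst.fderiv, hF.hasFDerivAt.snd.fderiv, comp_apply,
    coe_fst', coe_snd']

lemma divg_add {F G : ℝ × ℝ → ℝ × ℝ} (hF : DifferentiableAt ℝ F x)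
    (hG : DifferentiableAt ℝ G x) : divg (fun y => F y + G y) x = divg F x + divg G x := by
  rw [divg_eq_fderiv (hF.fun_add hG), divg_eq_fderiv hF, divg_eq_fderiv hG, fderiv_fun_add hF hG]
  simp only [add_apply, Prod.fst_add, Prod.snd_add]
  ring

lemma divg_sub {F G : ℝ × ℝ → ℝ × ℝ} (hF : DifferentiableAt ℝ F x)
    (hG : DifferentiableAt ℝ G x) : divg (fun y => F y - G y) x = divg F x - divg G x := by
  rw [divg_eq_fderiv (hF.fun_sub hG), divg_eq_fderiv hF, divg_eq_fderiv hG, fderiv_fun_sub hF hG]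
  simp only [sub_apply, Prod.fst_sub, Prod.snd_sub]
  ring

lemma divg_smul {φ : ℝ × ℝ → ℝ} {F : ℝ × ℝ → ℝ × ℝ} (hφ : DifferentiableAt ℝ φ x)
    (hF : DifferentiableAt ℝ F x) :
    divg (fun y => φ y • F y) x = fderiv ℝ φ x (F x) + φ x * divg F x := by
  rw [divg_eq_fderiv (hφ.fun_smul hF), divg_eq_fderiv hF, fderiv_fun_smul hφ hF, ← dot_grad]
  simp only [add_apply, smul_apply, smulRight_apply, Prod.fst_add, Prod.snd_add, Prod.smul_fst,
    Prod.smul_snd, smul_eq_mul, _root_.dot, grad, pd1, pd2]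
  ring

lemma divg_sub_const (x₀ : ℝ × ℝ) : divg (fun y => y - x₀) x = 2 := by
  rw [divg_eq_fderiv (differentiableAt_fun_id.sub_const x₀), fderiv_sub_const, fderiv_fun_id]
  norm_num

end Calculus

/-- Pohozaev-type divergence identity:
`Δu (∇v·(x−x₀)) + Δv (∇u·(x−x₀)) = div(∇u(∇v·(x−x₀)) + ∇v(∇u·(x−x₀)) − (∇u·∇v)(x−x₀))`. -/
theorem stmt_7 (U : Set (ℝ × ℝ)) (hU : IsOpen U) (u v : ℝ × ℝ → ℝ)
    (hu : ContDiffOn ℝ 2 u U) (hv : ContDiffOn ℝ 2 v U) (x₀ : ℝ × ℝ)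
    (x : ℝ × ℝ) (hx : x ∈ U) :
    lap u x * dot (grad v x) (x - x₀) + lap v x * dot (grad u x) (x - x₀)
      = divg (fun y =>
          dot (grad v y) (y - x₀) • grad u y + dot (grad u y) (y - x₀) • grad v y
            - dot (grad u y) (grad v y) • (y - x₀)) x := by
  have hu' := hu.contDiffAt (hU.mem_nhds hx)
  have hv' := hv.contDiffAt (hU.mem_nhds hx)
  have hgu := (hasFDerivAt_grad hu'.differentiableAt_fderiv).differentiableAt
  have hgv := (hasFDerivAt_grad hv'.differentiableAt_fderiv).differentiableAt
  have hw : DifferentiableAt ℝ (fun y => y - x₀) x := differentiableAt_fun_id.sub_const x₀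
  rw [divg_sub (((hgv.dot hw).fun_smul hgu).fun_add ((hgu.dot hw).fun_smul hgv))
      ((hgu.dot hgv).fun_smul hw),
    divg_add ((hgv.dot hw).fun_smul hgu) ((hgu.dot hw).fun_smul hgv), divg_smul (hgv.dot hw) hgu,
    divg_smul (hgu.dot hw) hgv, divg_smul (hgu.dot hgv) hw, divg_sub_const,
    fderiv_dot_apply hgv hw, fderiv_dot_apply hgu hw, fderiv_dot_apply hgu hgv,
    fderiv_sub_const, fderiv_fun_id]
  simp only [id_apply]
  rw [hv'.dot_fderiv_grad_comm, hu'.dot_fderiv_grad_comm,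
    dot_comm (grad u x) (fderiv ℝ (grad v) x _), dot_comm (grad v x) (grad u x)]
  unfold lap
  ring
end

section
/- Let G be harmonic in an annulus B_r(x₀) ∖ B_θ(x₀) ⊂ ℝ². Then for i ∈ {1,2}, the flux-type integral ∫_{∂B_r(x₀)} (D_i G)/|x − x₀| dσ equals ∫_{∂B_θ(x₀)} (D_i G)/|x − x₀| dσ. -/
open Complex InnerProductSpace Metric Set Real Topology Laplacian

lemma fderiv_fderiv_apply {𝕜 E F : Type*} [NontriviallyNormedField 𝕜] [NormedAddCommGroup E]
    [NormedSpace 𝕜 E] [NormedAddCommGroup F] [NormedSpace 𝕜 F] {f : E → F} {x : E}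
    (hf : DifferentiableAt 𝕜 (fderiv 𝕜 f) x) (v w : E) :
    fderiv 𝕜 (fun y => fderiv 𝕜 f y v) x w = fderiv 𝕜 (fderiv 𝕜 f) x w v := by
  simp [fderiv_clm_apply hf (differentiableAt_const v)]

lemma lap_eq_fderiv_fderiv {G : ℝ × ℝ → ℝ} {y : ℝ × ℝ}
    (hG : DifferentiableAt ℝ (fderiv ℝ G) y) :
    lap G y = fderiv ℝ (fderiv ℝ G) y (1, 0) (1, 0) + fderiv ℝ (fderiv ℝ G) y (0, 1) (0, 1) := by
  simp only [lap, divg, grad, pd1, pd2, fderiv_fderiv_apply hG]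

lemma laplacian_comp_equivRealProdCLM {G : ℝ × ℝ → ℝ} {z : ℂ}
    (hG : DifferentiableAt ℝ (fderiv ℝ G) (equivRealProdCLM z)) :
    Δ (G ∘ equivRealProdCLM) z = lap G (equivRealProdCLM z) := by
  have h := equivRealProdCLM.iteratedFDerivWithin_comp_right G uniqueDiffOn_univ (x := z)
    (mem_univ _) 2
  simp only [preimage_univ, iteratedFDerivWithin_univ] at h
  rw [lap_eq_fderiv_fderiv hG]
  simp [laplacian_eq_iteratedFDeriv_complexPlane, h, iteratedFDeriv_two_apply]

lemma harmonicAt_comp_equivRealProdCLM {U : Set (ℝ × ℝ)} (hU : IsOpen U) {G : ℝ × ℝ → ℝ}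
    (hG : ContDiffOn ℝ 2 G U) (hharm : ∀ x ∈ U, lap G x = 0) {z : ℂ}
    (hz : equivRealProdCLM z ∈ U) : HarmonicAt (G ∘ equivRealProdCLM) z := by
  have hzU : equivRealProdCLM ⁻¹' U ∈ 𝓝 z :=
    equivRealProdCLM.continuous.continuousAt.preimage_mem_nhds (hU.mem_nhds hz)
  refine ⟨(hG.contDiffAt (hU.mem_nhds hz)).comp z equivRealProdCLM.contDiff.contDiffAt, ?_⟩
  filter_upwards [hzU] with w hw
  rw [laplacian_comp_equivRealProdCLM, hharm _ hw, Pi.zero_apply]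
  exact ((hG.contDiffAt (hU.mem_nhds hw)).fderiv_right (m := 1) le_rfl).differentiableAt
    one_ne_zero

lemma differentiableAt_pd1_sub_I_mul_pd2 {U : Set (ℝ × ℝ)} (hU : IsOpen U) {G : ℝ × ℝ → ℝ}
    (hG : ContDiffOn ℝ 2 G U) (hharm : ∀ x ∈ U, lap G x = 0) {z : ℂ}
    (hz : equivRealProdCLM z ∈ U) :
    DifferentiableAt ℂ
      (fun z => (pd1 G (equivRealProdCLM z) : ℂ) - I * pd2 G (equivRealProdCLM z)) z := by
  convert HarmonicAt.differentiableAt_complex_partial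
    (harmonicAt_comp_equivRealProdCLM hU hG hharm hz) using 4 <;>
    simp [pd1, pd2, ContinuousLinearEquiv.comp_right_fderiv]

lemma circleAverage_eq_of_differentiableAt_annulus {E : Type*} [NormedAddCommGroup E]
    [NormedSpace ℂ E] {c : ℂ} {r R : ℝ} (h0 : 0 < r) (hle : r ≤ R) {f : ℂ → E}
    (hf : ∀ z ∈ closedBall c R \ ball c r, DifferentiableAt ℂ f z) :
    circleAverage f c R = circleAverage f c r := by
  rw [circleAverage_eq_circleIntegral (h0.trans_le hle).ne',
    circleAverage_eq_circleIntegral h0.ne',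
    circleIntegral_sub_center_inv_smul_eq_of_differentiable_on_annulus_off_countable h0 hle
      countable_empty (fun z hz => (hf z hz).continuousAt.continuousWithinAt)
      (fun z hz => hf z (sdiff_subset_sdiff ball_subset_closedBall ball_subset_closedBall hz.1))]

lemma circleAverage_clm_comp_eq_of_differentiableAt_annulus {E F : Type*}
    [NormedAddCommGroup E] [NormedSpace ℂ E] [CompleteSpace E] [NormedAddCommGroup F]
    [NormedSpace ℝ F] [CompleteSpace F] (L : E →L[ℝ] F) {c : ℂ} {r R : ℝ} (h0 : 0 < r)
    (hle : r ≤ R) {f : ℂ → E} (hf : ∀ z ∈ closedBall c R \ ball c r, DifferentiableAt ℂ f z) :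
    circleAverage (L ∘ f) c R = circleAverage (L ∘ f) c r := by
  have hint : ∀ ρ ∈ Icc r R, CircleIntegrable f c ρ := by
    refine fun ρ hρ => ContinuousOn.circleIntegrable (h0.le.trans hρ.1) fun z hz => ?_
    rw [mem_sphere] at hz
    refine (hf z ⟨?_, ?_⟩).continuousAt.continuousWithinAt
    · exact mem_closedBall.2 (hz ▸ hρ.2)
    · simpa [hz] using hρ.1
  rw [L.circleAverage_comp_comm (hint R ⟨hle, le_rfl⟩),
    L.circleAverage_comp_comm (hint r ⟨le_rfl, hle⟩),
    circleAverage_eq_of_differentiableAt_annulus h0 hle hf]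

lemma circleAverage_comp_equivRealProdCLM (φ : ℝ × ℝ → ℝ) (x₀ : ℝ × ℝ) (R : ℝ) :
    circleAverage (φ ∘ equivRealProdCLM) (equivRealProdCLM.symm x₀) R
      = (2 * π)⁻¹ * ∫ t in (0:ℝ)..(2 * π), φ (x₀ + (R * Real.cos t, R * Real.sin t)) := by
  rw [circleAverage_def, smul_eq_mul]
  congr with t
  exact congrArg φ (Prod.ext (by simp [circleMap]) (by simp [circleMap]))

/-- The circle integrals are written via the parametrization `x = x₀ + ρ(cos t, sin t)`,
`dσ = ρ dt`, `|x − x₀| = ρ`. -/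
theorem stmt_18 (x₀ : ℝ × ℝ) (θ r : ℝ) (hθ : 0 < θ) (hθr : θ < r)
    (U : Set (ℝ × ℝ)) (hU : IsOpen U)
    (hA : {x : ℝ × ℝ | θ ≤ Real.sqrt ((x.1 - x₀.1)^2 + (x.2 - x₀.2)^2) ∧
            Real.sqrt ((x.1 - x₀.1)^2 + (x.2 - x₀.2)^2) ≤ r} ⊆ U)
    (G : ℝ × ℝ → ℝ) (hG : ContDiffOn ℝ 2 G U) (hharm : ∀ x ∈ U, lap G x = 0)
    (i : Fin 2) :
    ∫ t in (0:ℝ)..(2 * Real.pi),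
        (if i = 0 then pd1 G else pd2 G) (x₀ + (r * Real.cos t, r * Real.sin t)) / r * r
      = ∫ t in (0:ℝ)..(2 * Real.pi),
          (if i = 0 then pd1 G else pd2 G) (x₀ + (θ * Real.cos t, θ * Real.sin t)) / θ * θ := by
  set c := equivRealProdCLM.symm x₀
  set F : ℂ → ℂ := fun z => (pd1 G (equivRealProdCLM z) : ℂ) - I * pd2 G (equivRealProdCLM z)
  set L : ℂ →L[ℝ] ℝ := if i = 0 then reCLM else -imCLM
  have hannulus : ∀ z ∈ closedBall c r \ ball c θ, equivRealProdCLM z ∈ U := by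
    rintro z ⟨hzr, hzθ⟩
    rw [mem_closedBall, dist_eq_re_im] at hzr
    rw [mem_ball, not_lt, dist_eq_re_im] at hzθ
    exact hA ⟨hzθ, hzr⟩
  have hF : ∀ z ∈ closedBall c r \ ball c θ, DifferentiableAt ℂ F z :=
    fun z hz => differentiableAt_pd1_sub_I_mul_pd2 hU hG hharm (hannulus z hz)
  have hLF : (if i = 0 then pd1 G else pd2 G) ∘ equivRealProdCLM = L ∘ F := by
    ext z; fin_cases i <;> simp [L, F]
  have havg := circleAverage_clm_comp_eq_of_differentiableAt_annulus L hθ hθr.le hF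
  rw [← hLF, circleAverage_comp_equivRealProdCLM, circleAverage_comp_equivRealProdCLM] at havg
  simp only [div_mul_cancel₀ _ (hθ.trans hθr).ne', div_mul_cancel₀ _ hθ.ne']
  exact mul_left_cancel₀ (by positivity) havg
end
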